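/- A language L is finite and closed under permutations (perm(L) = L) if and only if L can be obtained from the atomic languages ∅, {ε}, and {a} for a ∈ Σ using only the operations of union and shuffle (no iterated shuffle). -/

import Mathlib

variable {α : Type*}

/-- `IsShuffle u v w` means `w` is an interleaving of `u` and `v`. -/
inductive IsShuffle : List α → List α → List α → Prop
  | nil : IsShuffle [] [] []
  | left {u v w : List α} (a : α) : IsShuffle u v w → IsShuffle (a :: u) v (a :: w)
  | right {u v w : List α} (b : α) : IsShuffle u v w → IsShuffle u (b :: v) (b :: w)

/-- The shuffle `u ⧢ v` of two words, as a set of words. -/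
def wordShuffle (u v : List α) : Set (List α) := {w | IsShuffle u v w}

/-- The shuffle of two languages. -/
def lshuffle (L₁ L₂ : Set (List α)) : Set (List α) :=
  {w | ∃ u ∈ L₁, ∃ v ∈ L₂, IsShuffle u v w}

/-- n-fold shuffle power. -/
def shufflePow (L : Set (List α)) : ℕ → Set (List α)
  | 0 => {[]}
  | n + 1 => lshuffle (shufflePow L n) L

/-- Iterated shuffle `L^{⧢,*}`. -/
def shuffleStar (L : Set (List α)) : Set (List α) := ⋃ n, shufflePow L n

/-- The set of permutations of a word. -/
def permW (w : List α) : Set (List α) := {v | v.Perm w}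

/-- Permutation closure of a language. -/
def permL (L : Set (List α)) : Set (List α) := {v | ∃ w ∈ L, v.Perm w}

/-- Concatenation of languages. -/
def catL (L₁ L₂ : Set (List α)) : Set (List α) := {w | ∃ u ∈ L₁, ∃ v ∈ L₂, w = u ++ v}

/-- n-fold concatenation power. -/
def catPow (L : Set (List α)) : ℕ → Set (List α)
  | 0 => {[]}
  | n + 1 => catL (catPow L n) L

/-- Kleene star. -/
def kstar (L : Set (List α)) : Set (List α) := ⋃ n, catPow L n

/-- Parikh mapping: counts occurrences of each letter. -/
def parikh [DecidableEq α] (w : List α) : α → ℕ := fun a => w.count a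

/-- Languages described by α-SHUF expressions without iterated shuffle. -/
inductive ShufExprZero : Set (List α) → Prop
  | empty : ShufExprZero ∅
  | eps : ShufExprZero {[]}
  | single (a : α) : ShufExprZero {[a]}
  | union {L₁ L₂ : Set (List α)} : ShufExprZero L₁ → ShufExprZero L₂ → ShufExprZero (L₁ ∪ L₂)
  | shuf {L₁ L₂ : Set (List α)} : ShufExprZero L₁ → ShufExprZero L₂ → ShufExprZero (lshuffle L₁ L₂)

/-!
A finite permutation-closed language is the finite union of the permutation classes `permW w` of
its words, and `permW (a :: w) = {[a]} ⧢ permW w`. Conversely, union and shuffle preserve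
finiteness and permutation closure, the latter because `permL (L₁ ⧢ L₂) = permL L₁ ⧢ permL L₂`.
-/

theorem IsShuffle.perm_append {u v w : List α} (h : IsShuffle u v w) : w.Perm (u ++ v) := by
  induction h with
  | nil => rfl
  | left a _ ih => exact ih.cons a
  | right b _ ih => exact (ih.cons b).trans List.perm_middle.symm

theorem isShuffle_nil_left (v : List α) : IsShuffle [] v v := by
  induction v with
  | nil => exact .nil
  | cons b v ih => exact .right b ih

theorem isShuffle_append (u v : List α) : IsShuffle u v (u ++ v) := by
  induction u with
  | nil => exact isShuffle_nil_left v
  | cons a u ih => exact .left a ih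

/-- Every rearrangement of `u₁ ++ u₂` interleaves a rearrangement of `u₁` with one of `u₂`:
read it letter by letter, taking each letter from whichever of `u₁`, `u₂` still contains it. -/
theorem List.Perm.exists_isShuffle {v u₁ u₂ : List α} (h : v.Perm (u₁ ++ u₂)) :
    ∃ s t, s.Perm u₁ ∧ t.Perm u₂ ∧ IsShuffle s t v := by
  classical
  induction v generalizing u₁ u₂ with
  | nil =>
    obtain ⟨rfl, rfl⟩ := List.append_eq_nil_iff.mp (List.perm_nil.mp h.symm)
    exact ⟨[], [], .nil, .nil, .nil⟩
  | cons a v ih =>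
    rcases List.mem_append.mp (h.subset List.mem_cons_self) with ha | ha
    · have hu : u₁.Perm (a :: u₁.erase a) := List.perm_cons_erase ha
      obtain ⟨s, t, hs, ht, hst⟩ := ih ((List.perm_cons a).mp (h.trans (hu.append_right u₂)))
      exact ⟨a :: s, t, (hs.cons a).trans hu.symm, ht, .left a hst⟩
    · have hu : u₂.Perm (a :: u₂.erase a) := List.perm_cons_erase ha
      obtain ⟨s, t, hs, ht, hst⟩ :=
        ih ((List.perm_cons a).mp ((h.trans (hu.append_left u₁)).trans List.perm_middle))
      exact ⟨s, a :: t, hs, (ht.cons a).trans hu.symm, .right a hst⟩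

theorem permW_nil : permW ([] : List α) = {[]} := by
  ext v
  simp [permW]

theorem permW_singleton (a : α) : permW [a] = {[a]} := by
  ext v
  simp [permW]

theorem permW_append (u v : List α) : permW (u ++ v) = lshuffle (permW u) (permW v) := by
  ext w
  constructor
  · intro hw
    obtain ⟨s, t, hs, ht, hst⟩ := List.Perm.exists_isShuffle hw
    exact ⟨s, hs, t, ht, hst⟩
  · rintro ⟨s, hs, t, ht, hst⟩
    exact hst.perm_append.trans (hs.append ht)

theorem permW_finite (w : List α) : (permW w).Finite :=
  w.permutations.finite_toSet.subset fun _ hv => List.mem_permutations.mpr hv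

theorem permL_eq_biUnion_permW (L : Set (List α)) : permL L = ⋃ w ∈ L, permW w := by
  ext v
  simp [permL, permW]

theorem permL_singleton (w : List α) : permL {w} = permW w := by
  simp [permL_eq_biUnion_permW]

theorem Set.Finite.permL {L : Set (List α)} (hL : L.Finite) : (permL L).Finite := by
  rw [permL_eq_biUnion_permW]
  exact hL.biUnion fun w _ => permW_finite w

theorem subset_permL (L : Set (List α)) : L ⊆ permL L :=
  fun w hw => ⟨w, hw, List.Perm.refl w⟩

theorem lshuffle_subset_permL_image2 (L₁ L₂ : Set (List α)) :
    lshuffle L₁ L₂ ⊆ permL (Set.image2 (· ++ ·) L₁ L₂) :=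
  fun _ ⟨u, hu, v, hv, huv⟩ => ⟨u ++ v, Set.mem_image2_of_mem hu hv, huv.perm_append⟩

theorem Set.Finite.lshuffle {L₁ L₂ : Set (List α)} (h₁ : L₁.Finite) (h₂ : L₂.Finite) :
    (lshuffle L₁ L₂).Finite :=
  (h₁.image2 _ h₂).permL.subset (lshuffle_subset_permL_image2 L₁ L₂)

theorem permL_union (L₁ L₂ : Set (List α)) : permL (L₁ ∪ L₂) = permL L₁ ∪ permL L₂ := by
  ext v
  simp [permL, or_and_right, exists_or]

theorem permL_lshuffle (L₁ L₂ : Set (List α)) :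
    permL (lshuffle L₁ L₂) = lshuffle (permL L₁) (permL L₂) := by
  ext v
  constructor
  · rintro ⟨w, ⟨u₁, hu₁, u₂, hu₂, hw⟩, hvw⟩
    obtain ⟨s, t, hs, ht, hst⟩ := (hvw.trans hw.perm_append).exists_isShuffle
    exact ⟨s, ⟨u₁, hu₁, hs⟩, t, ⟨u₂, hu₂, ht⟩, hst⟩
  · rintro ⟨s, ⟨u₁, hu₁, hs⟩, t, ⟨u₂, hu₂, ht⟩, hst⟩
    exact ⟨u₁ ++ u₂, ⟨u₁, hu₁, u₂, hu₂, isShuffle_append u₁ u₂⟩,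
      hst.perm_append.trans (hs.append ht)⟩

theorem shufExprZero_permW (w : List α) : ShufExprZero (permW w) := by
  induction w with
  | nil => simpa only [permW_nil] using ShufExprZero.eps
  | cons a w ih =>
    rw [← List.singleton_append, permW_append, permW_singleton]
    exact .shuf (.single a) ih

theorem shufExprZero_biUnion_permW {S : Set (List α)} (hS : S.Finite) :
    ShufExprZero (⋃ w ∈ S, permW w) := by
  induction S, hS using Set.Finite.induction_on with
  | empty => simpa using ShufExprZero.empty
  | @insert w S _ _ ih =>
    rw [Set.biUnion_insert]
    exact .union (shufExprZero_permW w) ih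

theorem ShufExprZero.finite {L : Set (List α)} (h : ShufExprZero L) : L.Finite := by
  induction h with
  | empty => exact Set.finite_empty
  | eps => exact Set.finite_singleton _
  | single a => exact Set.finite_singleton _
  | union _ _ ih₁ ih₂ => exact ih₁.union ih₂
  | shuf _ _ ih₁ ih₂ => exact ih₁.lshuffle ih₂

theorem ShufExprZero.permL_eq {L : Set (List α)} (h : ShufExprZero L) : permL L = L := by
  induction h with
  | empty => simp [permL]
  | eps => rw [permL_singleton, permW_nil]
  | single a => rw [permL_singleton, permW_singleton]
  | union _ _ ih₁ ih₂ => rw [permL_union, ih₁, ih₂]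
  | shuf _ _ ih₁ ih₂ => rw [permL_lshuffle, ih₁, ih₂]

theorem stmt18 (L : Set (List α)) :
    (L.Finite ∧ permL L = L) ↔ ShufExprZero L := by
  refine ⟨fun ⟨hfin, hperm⟩ => ?_, fun h => ⟨h.finite, h.permL_eq⟩⟩
  rw [← hperm, permL_eq_biUnion_permW]
  exact shufExprZero_biUnion_permW hfin
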